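/- arXiv:1911.02296 — 4 statements merged into one kernel-verified Lean document; each statement's English description precedes it below -/
import Mathlib

section
/- Let (Ω, 𝓕, P) be a probability space, t₀ > 0, and let n : [0, t₀] → Ω → ℝ be a stochastic process such that for every ω ∈ Ω the path t ↦ n_t(ω) is antitone (nonincreasing) and nonnegative, each n_t is integrable, and the function m(t) := E[n_t] is continuous and strictly positive on [0, t₀]. Then for every ε ∈ (0,1) there exists a finite set I ⊆ [0, t₀] such that P( { ω : ∀ t ∈ [0, t₀], n_t(ω) ≤ (1−ε)⁻² · m(t) } ) ≥ P( { ω : ∀ s ∈ I, n_s(ω) ≤ (1−ε)⁻¹ · m(s) } ). In fact the second event is contained in the first. -/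
/-!
Since `m` is continuous and positive on the compact interval `[0, t₀]`, it is bounded below by
some `μ > 0` and uniformly continuous, so on a fine enough grid every time `t` has a grid point
`s ≤ t` with `m s ≤ (1 - ε)⁻¹ m t`. On the finite-grid event, monotonicity of the paths gives
`n t ≤ n s ≤ (1 - ε)⁻¹ m s ≤ (1 - ε)⁻² m t`.
-/

open MeasureTheory

theorem exists_finset_subset_Icc_forall_exists_le_sub_lt (a b : ℝ) {δ : ℝ} (hδ : 0 < δ) :
    ∃ I : Finset ℝ, ↑I ⊆ Set.Icc a b ∧
      ∀ t ∈ Set.Icc a b, ∃ s ∈ I, s ≤ t ∧ t - s < δ := by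
  classical
  let N := ⌈(b - a) / δ⌉₊
  refine ⟨((Finset.range (N + 1)).image fun k : ℕ => a + k * δ).filter (· ≤ b), ?_, ?_⟩
  · intro s hs
    simp only [Finset.coe_filter, Finset.mem_image, Finset.mem_range] at hs
    obtain ⟨⟨k, -, rfl⟩, hsb⟩ := hs
    exact ⟨le_add_of_nonneg_right (by positivity), hsb⟩
  · rintro t ⟨hat, htb⟩
    set k := ⌊(t - a) / δ⌋₊
    have hk_le : (k : ℝ) * δ ≤ t - a :=
      (le_div_iff₀ hδ).mp (Nat.floor_le (div_nonneg (sub_nonneg.mpr hat) hδ.le))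
    have hk_lt : t - a < (k + 1) * δ :=
      (div_lt_iff₀ hδ).mp (Nat.lt_floor_add_one _)
    have hkN : k < N + 1 := Nat.lt_succ_of_le <| (Nat.floor_le_floor
      (div_le_div_of_nonneg_right (by linarith) hδ.le)).trans (Nat.floor_le_ceil _)
    refine ⟨a + k * δ, ?_, by linarith, by linarith⟩
    simp only [Finset.mem_filter, Finset.mem_image, Finset.mem_range]
    exact ⟨⟨k, hkN, rfl⟩, by linarith⟩

theorem ContinuousOn.exists_finset_subset_Icc_forall_exists_le_mul {f : ℝ → ℝ} {a b : ℝ}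
    (hf : ContinuousOn f (Set.Icc a b)) (hpos : ∀ t ∈ Set.Icc a b, 0 < f t) {c : ℝ} (hc : 1 < c) :
    ∃ I : Finset ℝ, ↑I ⊆ Set.Icc a b ∧
      ∀ t ∈ Set.Icc a b, ∃ s ∈ I, s ≤ t ∧ f s ≤ c * f t := by
  obtain ⟨μ, hμ, hfμ⟩ := isCompact_Icc.exists_forall_le' hf hpos
  obtain ⟨δ, hδ, hfδ⟩ := Metric.uniformContinuousOn_iff.mp
    (isCompact_Icc.uniformContinuousOn_of_continuous hf) ((c - 1) * μ) (by nlinarith)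
  obtain ⟨I, hIsub, hInet⟩ := exists_finset_subset_Icc_forall_exists_le_sub_lt a b hδ
  refine ⟨I, hIsub, fun t ht => ?_⟩
  obtain ⟨s, hsI, hst, hts⟩ := hInet t ht
  have hclose : dist (f s) (f t) < (c - 1) * μ :=
    hfδ s (hIsub hsI) t ht (by rw [Real.dist_eq, abs_sub_lt_iff]; constructor <;> linarith)
  have hμt : μ ≤ f t := hfμ t ht
  refine ⟨s, hsI, hst, ?_⟩
  rw [Real.dist_eq, abs_sub_lt_iff] at hclose
  nlinarith [hclose.1]

theorem stmt_1_general {Ω : Type*} [MeasurableSpace Ω] (P : Measure Ω)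
    (t₀ : ℝ) (n : ℝ → Ω → ℝ)
    (hpath : ∀ ω, AntitoneOn (fun t => n t ω) (Set.Icc 0 t₀))
    (m : ℝ → ℝ)
    (hmcont : ContinuousOn m (Set.Icc 0 t₀))
    (hmpos : ∀ t ∈ Set.Icc (0:ℝ) t₀, 0 < m t)
    (ε : ℝ) (hε : ε ∈ Set.Ioo (0:ℝ) 1) :
    ∃ I : Finset ℝ, (↑I ⊆ Set.Icc (0:ℝ) t₀) ∧
      {ω | ∀ s ∈ I, n s ω ≤ (1 - ε)⁻¹ * m s} ⊆
        {ω | ∀ t ∈ Set.Icc (0:ℝ) t₀, n t ω ≤ ((1 - ε)⁻¹) ^ 2 * m t} ∧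
      P {ω | ∀ s ∈ I, n s ω ≤ (1 - ε)⁻¹ * m s} ≤
        P {ω | ∀ t ∈ Set.Icc (0:ℝ) t₀, n t ω ≤ ((1 - ε)⁻¹) ^ 2 * m t} := by
  obtain ⟨hε0, hε1⟩ := hε
  have hc : 1 < (1 - ε)⁻¹ := one_lt_inv₀ (by linarith) |>.mpr (by linarith)
  obtain ⟨I, hIsub, hInet⟩ := hmcont.exists_finset_subset_Icc_forall_exists_le_mul hmpos hc
  have hevent : {ω | ∀ s ∈ I, n s ω ≤ (1 - ε)⁻¹ * m s} ⊆
      {ω | ∀ t ∈ Set.Icc (0:ℝ) t₀, n t ω ≤ ((1 - ε)⁻¹) ^ 2 * m t} := by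
    intro ω hω t ht
    obtain ⟨s, hsI, hst, hms⟩ := hInet t ht
    calc n t ω ≤ n s ω := hpath ω (hIsub hsI) ht hst
      _ ≤ (1 - ε)⁻¹ * m s := hω s hsI
      _ ≤ (1 - ε)⁻¹ * ((1 - ε)⁻¹ * m t) := by gcongr
      _ = ((1 - ε)⁻¹) ^ 2 * m t := by ring
  exact ⟨I, hIsub, hevent, measure_mono hevent⟩

/-- Estimating the probability of a deviation of the survivor process `n` from its
expectation `m` over all of `[0,t₀]` by the probability of a larger deviation over a
finite set of time points.  The event on the finite set of times is contained in the
event over the whole interval, whence the probability inequality. -/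
theorem stmt_1 {Ω : Type*} [MeasurableSpace Ω] (P : Measure Ω) [IsProbabilityMeasure P]
    (t₀ : ℝ) (ht₀ : 0 < t₀) (n : ℝ → Ω → ℝ)
    (hpath : ∀ ω, AntitoneOn (fun t => n t ω) (Set.Icc 0 t₀))
    (hnonneg : ∀ ω, ∀ t ∈ Set.Icc (0:ℝ) t₀, 0 ≤ n t ω)
    (hint : ∀ t ∈ Set.Icc (0:ℝ) t₀, Integrable (n t) P)
    (m : ℝ → ℝ) (hm : ∀ t ∈ Set.Icc (0:ℝ) t₀, m t = ∫ ω, n t ω ∂P)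
    (hmcont : ContinuousOn m (Set.Icc 0 t₀))
    (hmpos : ∀ t ∈ Set.Icc (0:ℝ) t₀, 0 < m t)
    (ε : ℝ) (hε : ε ∈ Set.Ioo (0:ℝ) 1) :
    ∃ I : Finset ℝ, (↑I ⊆ Set.Icc (0:ℝ) t₀) ∧
      {ω | ∀ s ∈ I, n s ω ≤ (1 - ε)⁻¹ * m s} ⊆
        {ω | ∀ t ∈ Set.Icc (0:ℝ) t₀, n t ω ≤ ((1 - ε)⁻¹) ^ 2 * m t} ∧
      P {ω | ∀ s ∈ I, n s ω ≤ (1 - ε)⁻¹ * m s} ≤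
        P {ω | ∀ t ∈ Set.Icc (0:ℝ) t₀, n t ω ≤ ((1 - ε)⁻¹) ^ 2 * m t} :=
  stmt_1_general P t₀ n hpath m hmcont hmpos ε hε
end

section
/- Let u : ℝ → ℝ ∪ {−∞} be concave and increasing, not identically −∞, with γ_min := inf{x : u(x) > −∞} finite, and assume that for every p > 0 there exists x ∈ ℝ with p ∈ ∂u(x). Then u†(p) → γ_min as p → ∞. -/
open MeasureTheory Filter

noncomputable section

/-- The superdifferential of a concave `ℝ ∪ {−∞}`-valued function at `x`. -/
def SupDiff (g : ℝ → EReal) (x : ℝ) : Set ℝ :=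
  {p : ℝ | ∀ y : ℝ, g y ≤ g x + ((p * (y - x) : ℝ) : EReal)}

/-- `g†(p) = inf {x : p ∈ ∂g(x)}`. -/
noncomputable def dagger (g : ℝ → EReal) (p : ℝ) : ℝ :=
  sInf {x : ℝ | p ∈ SupDiff g x}

/-- Concavity of an `ℝ ∪ {−∞}`-valued function. -/
def ERealConcave (g : ℝ → EReal) : Prop :=
  ∀ x y t : ℝ, 0 ≤ t → t ≤ 1 →
    (t : EReal) * g x + ((1 - t : ℝ) : EReal) * g y ≤ g (t * x + (1 - t) * y)

/-- The standard normal cumulative distribution function. -/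
def stdNormalCDF (x : ℝ) : ℝ :=
  ∫ t in Set.Iic x, Real.exp (-t ^ 2 / 2) / Real.sqrt (2 * Real.pi)

/-- The inverse of the standard normal CDF (on `(0,1)`). -/
def stdNormalCDFInv : ℝ → ℝ := Function.invFun stdNormalCDF

/-- The pricing density `q(s) = exp(−M²/2 − M·Φ⁻¹(s))` of the abstract one-period
Black–Scholes–Merton market. -/
def priceDensity (M s : ℝ) : ℝ := Real.exp (-M ^ 2 / 2 - M * stdNormalCDFInv s)

/-- The optimal payoff `f^η(s) = v†(η·s₀^{C−1}·e^{−r·δt}·q(s))`. -/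
def fEta (v : ℝ → EReal) (M s₀ r δt C η s : ℝ) : ℝ :=
  dagger v (η * s₀ ^ (C - 1) * Real.exp (-(r * δt)) * priceDensity M s)

/-- The integral `∫₀¹ (1 + v(f^η(s))) ds`. -/
def intV (v : ℝ → EReal) (M s₀ r δt C η : ℝ) : ℝ :=
  ∫ s in Set.Ioo (0:ℝ) 1, (1 + (v (fEta v M s₀ r δt C η s)).toReal)

/-- The optimal consumption `γ^η`. -/
def gammaEta (u v : ℝ → EReal) (M s₀ r δt C η : ℝ) : ℝ :=
  dagger u (-(η / δt) * (-1 + s₀ * intV v M s₀ r δt C η)⁻¹)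

/-- The budget `X^η = γ^η + s₀^C ∫₀¹ e^{−r·δt} q(s) f^η(s) ds`. -/
def XEta (u v : ℝ → EReal) (M s₀ r δt C η : ℝ) : ℝ :=
  gammaEta u v M s₀ r δt C η +
    s₀ ^ C * ∫ s in Set.Ioo (0:ℝ) 1,
      Real.exp (-(r * δt)) * priceDensity M s * fEta v M s₀ r δt C η s


/-
A supergradient `1` at some point `x₁` gives the affine majorant `u y ≤ u x₁ + (y - x₁)`.
If `p ∈ ∂u(x)` with `x ≥ b`, test the supergradient inequality at a point `a < b` of the
domain: `p (x - a) ≤ u x - u a ≤ u x₁ + (x - x₁) - u a`, which bounds `p` in terms of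
`b - a`. So for large `p` every point carrying the supergradient `p`, hence `u†(p)`, lies
below `b`; and `u†(p) ≥ γ_min` because such points lie in the domain of `u`.
-/

section SupDiff

variable {g : ℝ → EReal} {p x : ℝ}

theorem ne_bot_of_mem_supDiff (hne : {y : ℝ | g y ≠ ⊥}.Nonempty) (hp : p ∈ SupDiff g x) :
    g x ≠ ⊥ := by
  obtain ⟨y, hy⟩ := hne
  intro hbot
  have h := hp y
  rw [hbot, EReal.bot_add, le_bot_iff] at h
  exact hy h

theorem coe_le_of_mem_supDiff {y X Y : ℝ} (hp : p ∈ SupDiff g x) (hX : g x = X) (hY : g y = Y) :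
    Y ≤ X + p * (y - x) := by
  have h := hp y
  rw [hX, hY] at h
  exact_mod_cast h

theorem sInf_domain_le_dagger (hne : {y : ℝ | g y ≠ ⊥}.Nonempty)
    (hbdd : BddBelow {y : ℝ | g y ≠ ⊥}) (hp : p ∈ SupDiff g x) :
    sInf {y : ℝ | g y ≠ ⊥} ≤ dagger g p :=
  le_csInf ⟨x, hp⟩ fun _ hz => csInf_le hbdd (ne_bot_of_mem_supDiff hne hz)

theorem dagger_le (hne : {y : ℝ | g y ≠ ⊥}.Nonempty) (hbdd : BddBelow {y : ℝ | g y ≠ ⊥})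
    (hp : p ∈ SupDiff g x) : dagger g p ≤ x :=
  csInf_le (hbdd.mono fun _ hz => ne_bot_of_mem_supDiff hne hz) hp

theorem eventually_forall_mem_supDiff_lt (hg : ∀ y, g y ≠ ⊤) {x₁ a b : ℝ}
    (h₁ : 1 ∈ SupDiff g x₁) (ha : g a ≠ ⊥) (hab : a < b) :
    ∀ᶠ p in atTop, ∀ x, p ∈ SupDiff g x → x < b := by
  have hne : {y : ℝ | g y ≠ ⊥}.Nonempty := ⟨a, ha⟩
  have coe_eq : ∀ {y}, g y ≠ ⊥ → g y = ((g y).toReal : EReal) :=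
    fun hy => (EReal.coe_toReal (hg _) hy).symm
  set A := (g a).toReal
  set X₁ := (g x₁).toReal
  set K := X₁ - x₁ + a - A
  filter_upwards [eventually_gt_atTop (max 1 (1 + K / (b - a)))] with p hP x hp
  rw [max_lt_iff] at hP
  by_contra! hbx
  have hx := ne_bot_of_mem_supDiff hne hp
  have hsup : A ≤ (g x).toReal + p * (a - x) :=
    coe_le_of_mem_supDiff hp (coe_eq hx) (coe_eq ha)
  have hmaj : (g x).toReal ≤ X₁ + 1 * (x - x₁) :=
    coe_le_of_mem_supDiff h₁ (coe_eq (ne_bot_of_mem_supDiff hne h₁)) (coe_eq hx)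
  have hK : K < (p - 1) * (b - a) := by
    have := (div_lt_iff₀ (sub_pos.2 hab)).1 (show K / (b - a) < p - 1 by linarith)
    linarith
  nlinarith [mul_le_mul_of_nonneg_left hbx (sub_nonneg.2 hP.1.le)]

end SupDiff

theorem stmt_8_general
    (u : ℝ → EReal)
    (hutop : ∀ x, u x ≠ ⊤)
    (hne : {x : ℝ | u x ≠ ⊥}.Nonempty) (hbdd : BddBelow {x : ℝ | u x ≠ ⊥})
    (husupp : ∀ p : ℝ, 0 < p → ∃ x : ℝ, p ∈ SupDiff u x) :
    Tendsto (dagger u) atTop (nhds (sInf {x : ℝ | u x ≠ ⊥})) := by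
  obtain ⟨x₁, h₁⟩ := husupp 1 one_pos
  refine tendsto_order.2 ⟨fun c hc => ?_, fun b hb => ?_⟩
  · filter_upwards [eventually_gt_atTop 0] with p hp
    obtain ⟨x, hx⟩ := husupp p hp
    exact hc.trans_le (sInf_domain_le_dagger hne hbdd hx)
  · obtain ⟨a, ha, hab⟩ := exists_lt_of_csInf_lt hne hb
    filter_upwards [eventually_gt_atTop 0,
      eventually_forall_mem_supDiff_lt hutop h₁ ha hab] with p hp hlt
    obtain ⟨x, hx⟩ := husupp p hp
    exact (dagger_le hne hbdd hx).trans_lt (hlt x hx)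

/-- For a concave increasing utility `u : ℝ → ℝ ∪ {−∞}`, not identically `−∞`, with
`γ_min = inf {x : u(x) > −∞}` finite, and such that every `p > 0` is a supergradient
of `u` at some point, `u†(p) → γ_min` as `p → ∞`. -/
theorem stmt_8
    (u : ℝ → EReal) (huconc : ERealConcave u) (humono : Monotone u)
    (hutop : ∀ x, u x ≠ ⊤)
    (hne : {x : ℝ | u x ≠ ⊥}.Nonempty) (hbdd : BddBelow {x : ℝ | u x ≠ ⊥})
    (husupp : ∀ p : ℝ, 0 < p → ∃ x : ℝ, p ∈ SupDiff u x) :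
    Tendsto (dagger u) atTop (nhds (sInf {x : ℝ | u x ≠ ⊥})) :=
  stmt_8_general u hutop hne hbdd husupp

end
end

section
/- Define g : (0, λ) → ℝ by g(W) = (1/k)·(1−k)^{1−1/k}·a^{−1/k}·(c+λ)^{1/k − 1}·W^{(1−k)/k}·(λ−W)^{−1/k}. Then: (i) g is positive and integrable near 0, and x(w) := ∫₀^w g(W) dW defines a strictly increasing differentiable map from (0, λ) onto (0, L), where L := sup_{w ∈ (0,λ)} x(w) ∈ (0, ∞]; (ii) its inverse w : (0, L) → (0, λ) is differentiable, and the function v̂(y) := (w(y) − λ)/(c+λ) satisfies −λ/(c+λ) < v̂(y) < 0 and the ordinary differential equation a·k·( ((c+λ)·v̂(y) + λ)/(a·(k−1)·v̂(y)) )^{(k−1)/k} = −v̂′(y)/v̂(y) for all y ∈ (0, L), with v̂(y) → −λ/(c+λ) as y → 0⁺. -/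
/-!
The integrand `g` is continuous on `[0, λ)` (its exponent at `0` is `(1-k)/k > 0`) and positive
on `(0, λ)`, so `x` is a primitive with `x' = g > 0` and `x(0⁺) = 0`; by the intermediate value
theorem it maps `(0, λ)` onto `(0, L)`. Its inverse `w` is monotone, hence continuous, and
differentiable with `w' = 1 / g(w)`. The ODE for `v̂ = (w - λ)/(c + λ)` is then the identity
`g(w) = (w (c+λ) / (a (1-k) (λ-w)))^((1-k)/k) / (a k (λ-w))`,
and `v̂(0⁺) = -λ/(c+λ)` because `w(y) → 0` as `y → 0⁺`.
-/

open MeasureTheory Filter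

noncomputable section

/-- The integrand `g(W)` whose antiderivative expresses wealth as a function of the
transformed value `W = (c+λ)·v̂ + λ`. -/
def gFun (a k c lam : ℝ) (W : ℝ) : ℝ :=
  1 / k * (1 - k) ^ (1 - 1 / k) * a ^ (-(1 / k)) * (c + lam) ^ (1 / k - 1) *
    W ^ ((1 - k) / k) * (lam - W) ^ (-(1 / k))

/-- The wealth `x(w) = ∫₀^w g(W) dW`. -/
def XFun (a k c lam : ℝ) (w : ℝ) : ℝ :=
  ∫ W in Set.Ioo (0:ℝ) w, gFun a k c lam W

/-- `L = sup_{w ∈ (0,λ)} x(w) ∈ (0,∞]`, as an extended real. -/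
def LSup (a k c lam : ℝ) : EReal :=
  ⨆ w ∈ Set.Ioo (0:ℝ) lam, ((XFun a k c lam w : ℝ) : EReal)

open Set Topology Function

theorem setIntegral_Ioo_eq_intervalIntegral (g : ℝ → ℝ) {w : ℝ} (hw : 0 ≤ w) :
    ∫ t in Ioo 0 w, g t = ∫ t in 0..w, g t := by
  rw [intervalIntegral.integral_of_le hw, integral_Ioc_eq_integral_Ioo]

section Primitive

variable {g : ℝ → ℝ} {b : ℝ}

theorem ContinuousOn.intervalIntegrable_zero_of_lt (hg : ContinuousOn g (Ico 0 b)) {w : ℝ}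
    (hw₀ : 0 ≤ w) (hw : w < b) : IntervalIntegrable g volume 0 w :=
  (hg.mono fun _ hx => ⟨hx.1, hx.2.trans_lt hw⟩).intervalIntegrable_of_Icc hw₀

theorem ContinuousOn.hasDerivAt_setIntegral_Ioo (hg : ContinuousOn g (Ico 0 b)) {w : ℝ}
    (hw : w ∈ Ioo 0 b) : HasDerivAt (fun w => ∫ t in Ioo 0 w, g t) (g w) w := by
  have hprim : HasDerivAt (fun u => ∫ t in 0..u, g t) (g w) w :=
    intervalIntegral.integral_hasDerivAt_right (hg.intervalIntegrable_zero_of_lt hw.1.le hw.2)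
      ((hg.mono Ioo_subset_Ico_self).stronglyMeasurableAtFilter isOpen_Ioo w hw)
      (hg.continuousAt (Ico_mem_nhds hw.1 hw.2))
  refine hprim.congr_of_eventuallyEq ?_
  filter_upwards [Ioi_mem_nhds hw.1] with u hu
  exact setIntegral_Ioo_eq_intervalIntegral g hu.le

theorem ContinuousOn.tendsto_setIntegral_Ioo_nhdsGT_zero (hg : ContinuousOn g (Ico 0 b))
    (hb : 0 < b) : Tendsto (fun w => ∫ t in Ioo 0 w, g t) (𝓝[>] 0) (𝓝 0) := by
  have hb₂ := half_pos hb
  have hprim : ContinuousWithinAt (fun u => ∫ t in 0..u, g t) (Ioo 0 (b / 2)) 0 :=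
    (intervalIntegral.continuousOn_primitive_interval'
      (hg.intervalIntegrable_zero_of_lt hb₂.le (half_lt_self hb)) left_mem_uIcc 0
      left_mem_uIcc).mono (Ioo_subset_Icc_self.trans_eq (uIcc_of_le hb₂.le).symm)
  have := hprim.tendsto
  rw [nhdsWithin_Ioo_eq_nhdsGT hb₂, intervalIntegral.integral_same] at this
  refine this.congr' ?_
  filter_upwards [self_mem_nhdsWithin] with u hu
  exact (setIntegral_Ioo_eq_intervalIntegral g (le_of_lt hu)).symm

theorem ContinuousOn.setIntegral_Ioo_pos (hg : ContinuousOn g (Ico 0 b))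
    (hpos : ∀ x ∈ Ioo 0 b, 0 < g x) {w : ℝ} (hw : w ∈ Ioo 0 b) :
    0 < ∫ t in Ioo 0 w, g t := by
  rw [setIntegral_Ioo_eq_intervalIntegral g hw.1.le]
  exact intervalIntegral.intervalIntegral_pos_of_pos_on
    (hg.intervalIntegrable_zero_of_lt hw.1.le hw.2)
    (fun x hx => hpos x ⟨hx.1, hx.2.trans hw.2⟩) hw.1

theorem ContinuousOn.strictMonoOn_setIntegral_Ioo (hg : ContinuousOn g (Ico 0 b))
    (hpos : ∀ x ∈ Ioo 0 b, 0 < g x) :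
    StrictMonoOn (fun w => ∫ t in Ioo 0 w, g t) (Ioo 0 b) := by
  refine strictMonoOn_of_deriv_pos (convex_Ioo 0 b)
    (fun w hw => (hg.hasDerivAt_setIntegral_Ioo hw).continuousAt.continuousWithinAt) ?_
  intro w hw
  rw [interior_Ioo] at hw
  rw [(hg.hasDerivAt_setIntegral_Ioo hw).deriv]
  exact hpos w hw

end Primitive

section Inverse

variable {f : ℝ → ℝ} {b : ℝ}

theorem image_Ioo_eq_of_strictMonoOn (hcont : ContinuousOn f (Ioo 0 b))
    (hmono : StrictMonoOn f (Ioo 0 b)) (hpos : ∀ x ∈ Ioo 0 b, 0 < f x)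
    (h₀ : Tendsto f (𝓝[>] 0) (𝓝 0)) :
    f '' Ioo 0 b = {y : ℝ | 0 < y ∧ (y : EReal) < ⨆ x ∈ Ioo 0 b, (f x : EReal)} := by
  ext y
  constructor
  · rintro ⟨x, hx, rfl⟩
    have hx' : (x + b) / 2 ∈ Ioo 0 b := ⟨by linarith [hx.1, hx.2], by linarith [hx.2]⟩
    refine ⟨hpos x hx, lt_of_lt_of_le ?_ (le_iSup₂_of_le _ hx' le_rfl)⟩
    exact EReal.coe_lt_coe_iff.2 (hmono hx hx' (by linarith [hx.2]))
  · rintro ⟨hy, hyL⟩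
    obtain ⟨x₁, hx₁, hyx₁⟩ : ∃ x₁ ∈ Ioo 0 b, y < f x₁ := by
      simpa [lt_iSup_iff] using hyL
    obtain ⟨x₀, hx₀y, hx₀⟩ : ∃ x₀, f x₀ < y ∧ x₀ ∈ Ioo 0 x₁ :=
      ((h₀.eventually (gt_mem_nhds hy)).and (Ioo_mem_nhdsGT hx₁.1)).exists
    obtain ⟨x, hx, rfl⟩ := intermediate_value_Ioo hx₀.2.le
      (hcont.mono (Icc_subset_Ioo hx₀.1 hx₁.2)) ⟨hx₀y, hyx₁⟩
    exact ⟨x, ⟨hx₀.1.trans hx.1, hx.2.trans hx₁.2⟩, rfl⟩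

variable {s : Set ℝ}

theorem StrictMonoOn.monotoneOn_invFunOn (hf : StrictMonoOn f s) :
    MonotoneOn (invFunOn f s) (f '' s) := fun y₁ hy₁ y₂ hy₂ hy =>
  (hf.le_iff_le (invFunOn_mem hy₁) (invFunOn_mem hy₂)).1
    (by rwa [invFunOn_eq hy₁, invFunOn_eq hy₂])

theorem StrictMonoOn.continuousAt_invFunOn (hf : StrictMonoOn f s) (hs : IsOpen s)
    (hfs : IsOpen (f '' s)) {y : ℝ} (hy : y ∈ f '' s) : ContinuousAt (invFunOn f s) y := by
  refine continuousAt_of_monotoneOn_of_image_mem_nhds hf.monotoneOn_invFunOn (hfs.mem_nhds hy) ?_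
  rw [hf.injOn.leftInvOn_invFunOn.image_image]
  exact hs.mem_nhds (invFunOn_mem hy)

theorem StrictMonoOn.hasDerivAt_invFunOn (hf : StrictMonoOn f s) (hs : IsOpen s)
    (hfs : IsOpen (f '' s)) {y f' : ℝ} (hy : y ∈ f '' s)
    (hderiv : HasDerivAt f f' (invFunOn f s y)) (hf' : f' ≠ 0) :
    HasDerivAt (invFunOn f s) f'⁻¹ y := by
  refine hderiv.of_local_left_inverse (hf.continuousAt_invFunOn hs hfs hy) hf' ?_
  filter_upwards [hfs.mem_nhds hy] with z hz
  exact invFunOn_eq hz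

theorem StrictMonoOn.tendsto_invFunOn_nhdsWithin_zero (hf : StrictMonoOn f (Ioo 0 b))
    (hpos : ∀ x ∈ Ioo 0 b, 0 < f x) :
    Tendsto (invFunOn f (Ioo 0 b)) (𝓝[f '' Ioo 0 b] 0) (𝓝 0) := by
  refine tendsto_order.2 ⟨fun ε hε => ?_, fun ε hε => ?_⟩
  · filter_upwards [self_mem_nhdsWithin] with y hy
    exact hε.trans (invFunOn_mem hy).1
  rcases le_or_gt b ε with hbε | hεb
  · filter_upwards [self_mem_nhdsWithin] with y hy
    exact (invFunOn_mem hy).2.trans_le hbε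
  have hx : ε / 2 ∈ Ioo 0 b := ⟨half_pos hε, (half_lt_self hε).trans hεb⟩
  filter_upwards [self_mem_nhdsWithin, mem_nhdsWithin_of_mem_nhds (Iio_mem_nhds (hpos _ hx))]
    with y hy hyx
  have : f (invFunOn f (Ioo 0 b) y) < f (ε / 2) := by rwa [invFunOn_eq hy]
  exact ((hf.lt_iff_lt (invFunOn_mem hy) hx).1 this).trans (half_lt_self hε)

end Inverse

section ValueFunction

variable {a k c lam : ℝ}

theorem gFun_pos (ha : 0 < a) (hk0 : 0 < k) (hk1 : k < 1) (hcl : 0 < c + lam) {W : ℝ}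
    (hW : W ∈ Ioo 0 lam) : 0 < gFun a k c lam W := by
  have hW₀ := hW.1
  have hlW : 0 < lam - W := sub_pos.2 hW.2
  have hk : 0 < 1 - k := sub_pos.2 hk1
  unfold gFun
  positivity

theorem continuousOn_gFun (hk0 : 0 < k) (hk1 : k < 1) :
    ContinuousOn (gFun a k c lam) (Ico 0 lam) := by
  have hp : 0 ≤ (1 - k) / k := div_nonneg (sub_pos.2 hk1).le hk0.le
  intro W hW
  have hlW : lam - W ≠ 0 := (sub_pos.2 hW.2).ne'
  unfold gFun
  fun_prop (disch := first | assumption | exact Or.inr hp | exact Or.inl hlW)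

theorem gFun_eq_rpow_div (ha : 0 < a) (hk0 : 0 < k) (hk1 : k < 1) (hcl : 0 < c + lam) {w : ℝ}
    (hw : w ∈ Ioo 0 lam) :
    gFun a k c lam w =
      (w * (c + lam) / (a * (1 - k) * (lam - w))) ^ ((1 - k) / k) / (a * k * (lam - w)) := by
  have hw₀ := hw.1
  have hlw : 0 < lam - w := sub_pos.2 hw.2
  have h1k : 0 < 1 - k := sub_pos.2 hk1
  set p := (1 - k) / k
  have e₁ : 1 - 1 / k = -p := by simp only [p]; field_simp; ring
  have e₂ : 1 / k - 1 = p := by simp only [p]; field_simp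
  have e₃ : -(1 / k) = -p - 1 := by simp only [p]; field_simp; ring
  rw [gFun, e₁, e₂, e₃, show (1 - k) / k = p from rfl, Real.rpow_neg h1k.le,
    Real.rpow_sub_one ha.ne', Real.rpow_neg ha.le, Real.rpow_sub_one hlw.ne', Real.rpow_neg hlw.le,
    Real.div_rpow (by positivity) (by positivity), Real.mul_rpow hw₀.le hcl.le,
    Real.mul_rpow (by positivity) hlw.le, Real.mul_rpow ha.le h1k.le]
  field_simp

theorem ode_of_gFun (ha : 0 < a) (hk0 : 0 < k) (hk1 : k < 1) (hcl : 0 < c + lam) {w : ℝ}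
    (hw : w ∈ Ioo 0 lam) :
    a * k * (((c + lam) * ((w - lam) / (c + lam)) + lam) /
        (a * (k - 1) * ((w - lam) / (c + lam)))) ^ ((k - 1) / k) =
      -((gFun a k c lam w)⁻¹ / (c + lam)) / ((w - lam) / (c + lam)) := by
  have hlw : 0 < lam - w := sub_pos.2 hw.2
  have h1k : 0 < 1 - k := sub_pos.2 hk1
  have hwl : w - lam ≠ 0 := by linarith
  have hk : k - 1 ≠ 0 := by linarith
  have hbase : ((c + lam) * ((w - lam) / (c + lam)) + lam) /
      (a * (k - 1) * ((w - lam) / (c + lam))) = w * (c + lam) / (a * (1 - k) * (lam - w)) := by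
    field_simp
    ring
  have hexp : (k - 1) / k = -((1 - k) / k) := by ring
  have hQ : 0 < w * (c + lam) / (a * (1 - k) * (lam - w)) := by have := hw.1; positivity
  rw [hbase, hexp, Real.rpow_neg hQ.le, gFun_eq_rpow_div ha hk0 hk1 hcl hw]
  field_simp
  ring

theorem integrableOn_gFun (hk0 : 0 < k) (hk1 : k < 1) {w : ℝ} (hw : w ∈ Ioo 0 lam) :
    IntegrableOn (gFun a k c lam) (Ioo 0 w) :=
  ((continuousOn_gFun hk0 hk1).intervalIntegrable_zero_of_lt hw.1.le hw.2).1.mono_set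
    Ioo_subset_Ioc_self

theorem hasDerivAt_XFun (hk0 : 0 < k) (hk1 : k < 1) {w : ℝ} (hw : w ∈ Ioo 0 lam) :
    HasDerivAt (XFun a k c lam) (gFun a k c lam w) w :=
  (continuousOn_gFun hk0 hk1).hasDerivAt_setIntegral_Ioo hw

theorem strictMonoOn_XFun (ha : 0 < a) (hk0 : 0 < k) (hk1 : k < 1) (hcl : 0 < c + lam) :
    StrictMonoOn (XFun a k c lam) (Ioo 0 lam) :=
  (continuousOn_gFun hk0 hk1).strictMonoOn_setIntegral_Ioo fun _ => gFun_pos ha hk0 hk1 hcl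

theorem XFun_pos (ha : 0 < a) (hk0 : 0 < k) (hk1 : k < 1) (hcl : 0 < c + lam) {w : ℝ}
    (hw : w ∈ Ioo 0 lam) : 0 < XFun a k c lam w :=
  (continuousOn_gFun hk0 hk1).setIntegral_Ioo_pos (fun _ => gFun_pos ha hk0 hk1 hcl) hw

theorem image_XFun (ha : 0 < a) (hk0 : 0 < k) (hk1 : k < 1) (hlam : 0 < lam)
    (hcl : 0 < c + lam) :
    XFun a k c lam '' Ioo 0 lam = {y : ℝ | 0 < y ∧ (y : EReal) < LSup a k c lam} :=
  image_Ioo_eq_of_strictMonoOn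
    (fun _ hw => (hasDerivAt_XFun hk0 hk1 hw).continuousAt.continuousWithinAt)
    (strictMonoOn_XFun ha hk0 hk1 hcl)
    (fun _ => XFun_pos ha hk0 hk1 hcl)
    ((continuousOn_gFun hk0 hk1).tendsto_setIntegral_Ioo_nhdsGT_zero hlam)

end ValueFunction

/-- Construction of the value function of the "mattress" problem: (i) `g` is
positive and integrable near `0`, and `x(w) = ∫₀^w g` is a strictly increasing
differentiable map from `(0,λ)` onto `(0,L)`, `L = sup x ∈ (0,∞]`; (ii) its inverse
`w : (0,L) → (0,λ)` is differentiable and `v̂(y) = (w(y) − λ)/(c+λ)` satisfies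
`−λ/(c+λ) < v̂ < 0`, the first-order ODE of the stationary HJB equation, and
`v̂(y) → −λ/(c+λ)` as `y → 0⁺`. -/
theorem stmt_16 (a k lam c : ℝ) (ha : 0 < a) (hk0 : 0 < k) (hk1 : k < 1)
    (hlam : 0 < lam) (hcl : 0 < c + lam) :
    -- (i)
    (∀ W ∈ Set.Ioo (0:ℝ) lam, 0 < gFun a k c lam W) ∧
    (∃ δ ∈ Set.Ioo (0:ℝ) lam, IntegrableOn (gFun a k c lam) (Set.Ioo 0 δ)) ∧
    (∀ w ∈ Set.Ioo (0:ℝ) lam, IntegrableOn (gFun a k c lam) (Set.Ioo 0 w)) ∧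
    StrictMonoOn (XFun a k c lam) (Set.Ioo 0 lam) ∧
    (∀ w ∈ Set.Ioo (0:ℝ) lam, HasDerivAt (XFun a k c lam) (gFun a k c lam w) w) ∧
    (0 : EReal) < LSup a k c lam ∧
    XFun a k c lam '' Set.Ioo 0 lam =
      {y : ℝ | 0 < y ∧ (y : EReal) < LSup a k c lam} ∧
    -- (ii)
    ∃ W : ℝ → ℝ,
      (∀ y : ℝ, 0 < y → (y : EReal) < LSup a k c lam →
        W y ∈ Set.Ioo 0 lam ∧ XFun a k c lam (W y) = y ∧
        DifferentiableAt ℝ W y ∧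
        (-lam / (c + lam) < (W y - lam) / (c + lam) ∧
          (W y - lam) / (c + lam) < 0) ∧
        a * k * (((c + lam) * ((W y - lam) / (c + lam)) + lam) /
            (a * (k - 1) * ((W y - lam) / (c + lam)))) ^ ((k - 1) / k) =
          -(deriv (fun z => (W z - lam) / (c + lam)) y) /
            ((W y - lam) / (c + lam))) ∧
      (∀ x ∈ Set.Ioo (0:ℝ) lam, W (XFun a k c lam x) = x) ∧
      Tendsto (fun y => (W y - lam) / (c + lam))
        (nhdsWithin 0 {y : ℝ | 0 < y ∧ (y : EReal) < LSup a k c lam})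
        (nhds (-lam / (c + lam))) := by
  have hgpos : ∀ w ∈ Ioo 0 lam, 0 < gFun a k c lam w := fun _ => gFun_pos ha hk0 hk1 hcl
  have hmono := strictMonoOn_XFun ha hk0 hk1 hcl
  have himage := image_XFun ha hk0 hk1 hlam hcl
  have hmid : lam / 2 ∈ Ioo 0 lam := ⟨half_pos hlam, half_lt_self hlam⟩
  have hopen : IsOpen (XFun a k c lam '' Ioo 0 lam) :=
    himage ▸ isOpen_Ioi.inter (isOpen_Iio.preimage continuous_coe_real_ereal)
  refine ⟨hgpos, ⟨lam / 2, hmid, integrableOn_gFun hk0 hk1 hmid⟩,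
    fun _ => integrableOn_gFun hk0 hk1, hmono, fun _ => hasDerivAt_XFun hk0 hk1,
    ?_, himage, invFunOn (XFun a k c lam) (Ioo 0 lam), fun y hy₀ hyL => ?_,
    fun _ hx => hmono.injOn.leftInvOn_invFunOn hx, ?_⟩
  · obtain ⟨hpos, hlt⟩ := himage.subset (mem_image_of_mem _ hmid)
    exact (EReal.coe_pos.2 hpos).trans hlt
  · have hy : y ∈ XFun a k c lam '' Ioo 0 lam := himage ▸ ⟨hy₀, hyL⟩
    have hWy := invFunOn_mem hy
    have hW := hmono.hasDerivAt_invFunOn isOpen_Ioo hopen hy (hasDerivAt_XFun hk0 hk1 hWy)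
      (hgpos _ hWy).ne'
    refine ⟨hWy, invFunOn_eq hy, hW.differentiableAt,
      ⟨div_lt_div_of_pos_right (by linarith [hWy.1]) hcl,
        div_neg_of_neg_of_pos (by linarith [hWy.2]) hcl⟩, ?_⟩
    rw [((hW.sub_const lam).div_const (c + lam)).deriv]
    exact ode_of_gFun ha hk0 hk1 hcl hWy
  · rw [← himage]
    simpa using ((hmono.tendsto_invFunOn_nhdsWithin_zero fun _ =>
      XFun_pos ha hk0 hk1 hcl).sub_const lam).div_const (c + lam)

end
end

section
/- Let I ⊆ (0, ∞) be an open interval and let v̂ : I → ℝ be differentiable with v̂ < 0 and (c+λ)·v̂ + λ > 0 on I, satisfying the ordinary differential equation a·k·( ((c+λ)·v̂(x) + λ)/(a·(k−1)·v̂(x)) )^{(k−1)/k} = −v̂′(x)/v̂(x) for all x ∈ I. Define the optimal consumption γ*(x) = ( ((c+λ)·v̂(x) + λ)/(a·(k−1)·v̂(x)) )^{1/k}. If x : [0, T) → I is differentiable with x′(t) = −γ*(x(t)) for all t ∈ [0, T), then the function w(t) := (c+λ)·v̂(x(t)) + λ satisfies w′(t) = (c+λ)·(k/(k−1))·w(t)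 for all t, and consequently w(t) = w(0)·exp( k·(c+λ)·t/(k−1) ) for all t ∈ [0, T). -/
/-!
Writing `R = ((c+λ)v̂ + λ)/(a(k−1)v̂) > 0`, the HJB equation says `v̂′ = −a k v̂ R^{(k−1)/k}`,
so along the trajectory `(v̂ ∘ x)′ = v̂′ · (−R^{1/k}) = a k v̂ R`, and `a k v̂ R` is exactly
`k/(k−1) · ((c+λ)v̂ + λ)`. Thus `w` solves the linear equation `w′ = (c+λ) k/(k−1) · w`, whose
solutions are the exponentials: `w(s)·exp(−(c+λ) k s/(k−1))` has zero derivative.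
-/

open Set Real

theorem eq_mul_exp_of_hasDerivAt_mul_self {f : ℝ → ℝ} {D a b : ℝ} (hab : a ≤ b)
    (hf : ∀ s ∈ Icc a b, HasDerivAt f (D * f s) s) :
    f b = f a * exp (D * (b - a)) := by
  set g : ℝ → ℝ := fun s => f s * exp (-(D * s))
  have hg : ∀ s ∈ Icc a b, HasDerivAt g 0 s := fun s hs => by
    have hexp : HasDerivAt (fun s => exp (-(D * s))) (exp (-(D * s)) * -(D * 1)) s :=
      ((hasDerivAt_id s).const_mul D).neg.exp
    exact ((hf s hs).mul hexp).congr_deriv (by ring)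
  have hconst := constant_of_has_deriv_right_zero
    (fun s hs => (hg s hs).continuousAt.continuousWithinAt)
    (fun s hs => (hg s (Ico_subset_Icc_self hs)).hasDerivWithinAt) b ⟨hab, le_rfl⟩
  calc f b = g b * exp (D * b) := by
        simp only [g]; rw [mul_assoc, ← exp_add, neg_add_cancel, exp_zero, mul_one]
    _ = g a * exp (D * b) := by rw [hconst]
    _ = f a * exp (D * (b - a)) := by simp only [g]; rw [mul_assoc, ← exp_add]; ring_nf

theorem hjb_deriv_mul_neg_consumption {a k m l v v' : ℝ} (ha : 0 < a) (hk0 : k ≠ 0)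
    (hk1 : k < 1) (hv : v < 0) (hw : 0 < m * v + l)
    (hODE : a * k * ((m * v + l) / (a * (k - 1) * v)) ^ ((k - 1) / k) = -v' / v) :
    v' * -((m * v + l) / (a * (k - 1) * v)) ^ (1 / k) = k / (k - 1) * (m * v + l) := by
  set R := (m * v + l) / (a * (k - 1) * v) with hR
  have hR_pos : 0 < R := div_pos hw (by nlinarith [mul_neg_of_pos_of_neg ha (sub_neg.2 hk1)])
  have hv' : v' = -(a * k * v) * R ^ ((k - 1) / k) := by
    have : v' = -(-v' / v) * v := by field_simp [hv.ne]
    rw [this, ← hODE]; ring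
  have hpow : R ^ ((k - 1) / k) * R ^ (1 / k) = R := by
    rw [← rpow_add hR_pos, ← add_div, sub_add_cancel, div_self hk0, rpow_one]
  calc v' * -R ^ (1 / k) = a * k * v * (R ^ ((k - 1) / k) * R ^ (1 / k)) := by rw [hv']; ring
    _ = k / (k - 1) * (m * v + l) := by rw [hpow, hR]; field_simp [hv.ne, ha.ne', sub_ne_zero.2 hk1.ne]

theorem stmt_17_general (a k lam c : ℝ) (ha : 0 < a) (hk0 : 0 < k) (hk1 : k < 1)
    (A B : ℝ)
    (vhat : ℝ → ℝ)
    (hdiff : ∀ y ∈ Set.Ioo A B, DifferentiableAt ℝ vhat y)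
    (hneg : ∀ y ∈ Set.Ioo A B, vhat y < 0)
    (hpos : ∀ y ∈ Set.Ioo A B, 0 < (c + lam) * vhat y + lam)
    (hODE : ∀ y ∈ Set.Ioo A B,
      a * k * (((c + lam) * vhat y + lam) / (a * (k - 1) * vhat y)) ^ ((k - 1) / k) =
        -(deriv vhat y) / vhat y)
    (T : ℝ) (x : ℝ → ℝ)
    (hxI : ∀ t ∈ Set.Ico (0:ℝ) T, x t ∈ Set.Ioo A B)
    (hx : ∀ t ∈ Set.Ico (0:ℝ) T,
      HasDerivAt x
        (-(((c + lam) * vhat (x t) + lam) / (a * (k - 1) * vhat (x t))) ^ (1 / k)) t) :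
    ∀ t ∈ Set.Ico (0:ℝ) T,
      HasDerivAt (fun s => (c + lam) * vhat (x s) + lam)
        ((c + lam) * (k / (k - 1)) * ((c + lam) * vhat (x t) + lam)) t ∧
      (c + lam) * vhat (x t) + lam =
        ((c + lam) * vhat (x 0) + lam) * Real.exp (k * (c + lam) * t / (k - 1)) := by
  have hw : ∀ t ∈ Ico (0:ℝ) T, HasDerivAt (fun s => (c + lam) * vhat (x s) + lam)
      ((c + lam) * (k / (k - 1)) * ((c + lam) * vhat (x t) + lam)) t := fun t ht => by
    have hxt := hxI t ht
    have hchain := ((hdiff _ hxt).hasDerivAt.comp t (hx t ht)).const_mul (c + lam)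
    rw [hjb_deriv_mul_neg_consumption ha hk0.ne' hk1 (hneg _ hxt) (hpos _ hxt) (hODE _ hxt),
      ← mul_assoc] at hchain
    exact hchain.add_const lam
  intro t ht
  refine ⟨hw t ht, ?_⟩
  rw [eq_mul_exp_of_hasDerivAt_mul_self ht.1
    (fun s hs => hw s ⟨hs.1, hs.2.trans_lt ht.2⟩), sub_zero]
  congr 2
  ring

/-- Dynamics of the transformed value along the optimal wealth trajectory: if `v̂`
satisfies the stationary HJB ODE on an open interval `I ⊆ (0,∞)` and the wealth
`x(t)` follows `x′ = −γ*(x)` with `γ*(x) = (((c+λ)v̂(x)+λ)/(a(k−1)v̂(x)))^{1/k}`, then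
`w(t) = (c+λ)·v̂(x(t)) + λ` satisfies `w′ = (c+λ)·(k/(k−1))·w`, hence
`w(t) = w(0)·exp(k·(c+λ)·t/(k−1))`. -/
theorem stmt_17 (a k lam c : ℝ) (ha : 0 < a) (hk0 : 0 < k) (hk1 : k < 1)
    (hlam : 0 < lam) (hcl : 0 < c + lam)
    (A B : ℝ) (hA : 0 ≤ A)
    (vhat : ℝ → ℝ)
    (hdiff : ∀ y ∈ Set.Ioo A B, DifferentiableAt ℝ vhat y)
    (hneg : ∀ y ∈ Set.Ioo A B, vhat y < 0)
    (hpos : ∀ y ∈ Set.Ioo A B, 0 < (c + lam) * vhat y + lam)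
    (hODE : ∀ y ∈ Set.Ioo A B,
      a * k * (((c + lam) * vhat y + lam) / (a * (k - 1) * vhat y)) ^ ((k - 1) / k) =
        -(deriv vhat y) / vhat y)
    (T : ℝ) (x : ℝ → ℝ)
    (hxI : ∀ t ∈ Set.Ico (0:ℝ) T, x t ∈ Set.Ioo A B)
    (hx : ∀ t ∈ Set.Ico (0:ℝ) T,
      HasDerivAt x
        (-(((c + lam) * vhat (x t) + lam) / (a * (k - 1) * vhat (x t))) ^ (1 / k)) t) :
    ∀ t ∈ Set.Ico (0:ℝ) T,
      HasDerivAt (fun s => (c + lam) * vhat (x s) + lam)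
        ((c + lam) * (k / (k - 1)) * ((c + lam) * vhat (x t) + lam)) t ∧
      (c + lam) * vhat (x t) + lam =
        ((c + lam) * vhat (x 0) + lam) * Real.exp (k * (c + lam) * t / (k - 1)) :=
  stmt_17_general a k lam c ha hk0 hk1 A B vhat hdiff hneg hpos hODE T x hxI hx
end
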